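/- Let X and Y be Polish spaces, P ∈ P(X), f : X → Y a Borel map, d : Y × Y → [0,∞] a Borel transportation cost on Y, and ε ≥ 0. Then the pushforward under f of the OT ambiguity set with cost d ∘ (f × f) is contained in the OT ambiguity set with cost d around the pushforward center: f_# B_ε^{d∘(f×f)}(P) ⊆ B_ε^d(f_#P). -/

import Mathlib

open MeasureTheory
open scoped ENNReal

noncomputable section

/-- The set of couplings of two measures. -/
def couplings {X : Type*} [MeasurableSpace X] (P Q : Measure X) :
    Set (Measure (X × X)) :=
  {γ | IsProbabilityMeasure γ ∧ γ.map Prod.fst = P ∧ γ.map Prod.snd = Q}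

/-- Optimal transport discrepancy with transportation cost `c`. -/
def OTCost {X : Type*} [MeasurableSpace X] (c : X × X → ℝ≥0∞) (P Q : Measure X) : ℝ≥0∞ :=
  ⨅ γ ∈ couplings P Q, ∫⁻ x, c x ∂γ

/-- The optimal transport ambiguity set of radius `ε` around `P`, for cost `c`. -/
def ambiguitySet {X : Type*} [MeasurableSpace X] (c : X × X → ℝ≥0∞) (ε : ℝ≥0∞)
    (P : Measure X) : Set (Measure X) :=
  {Q | IsProbabilityMeasure Q ∧ OTCost c P Q ≤ ε}

/-! Every coupling `γ` of `P` and `Q` is carried by `f × f` to a coupling of `f_#P` and `f_#Q`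
with the same cost, so the infimum defining `W_d(f_#P, f_#Q)` runs over a larger set than the one
defining `W_{d ∘ (f × f)}(P, Q)`. -/

section

variable {X Y : Type*} [MeasurableSpace X] [MeasurableSpace Y] {f : X → Y}

theorem map_prodMap_mem_couplings (hf : Measurable f) {P Q : Measure X} {γ : Measure (X × X)}
    (hγ : γ ∈ couplings P Q) : γ.map (Prod.map f f) ∈ couplings (P.map f) (Q.map f) := by
  obtain ⟨hγprob, rfl, rfl⟩ := hγ
  refine ⟨Measure.isProbabilityMeasure_map (hf.prodMap hf).aemeasurable, ?_, ?_⟩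
  · rw [Measure.map_map measurable_fst (hf.prodMap hf), Measure.map_map hf measurable_fst]
    rfl
  · rw [Measure.map_map measurable_snd (hf.prodMap hf), Measure.map_map hf measurable_snd]
    rfl

theorem OTCost_map_le (hf : Measurable f) {d : Y × Y → ℝ≥0∞} (hd : Measurable d)
    (P Q : Measure X) : OTCost d (P.map f) (Q.map f) ≤ OTCost (d ∘ Prod.map f f) P Q :=
  le_iInf₂ fun γ hγ =>
    calc OTCost d (P.map f) (Q.map f) ≤ ∫⁻ y, d y ∂(γ.map (Prod.map f f)) :=
          biInf_le _ (map_prodMap_mem_couplings hf hγ)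
      _ = ∫⁻ x, (d ∘ Prod.map f f) x ∂γ := lintegral_map hd (hf.prodMap hf)

end

theorem pushforward_ambiguity_subset_general
    {X Y : Type*}
    [MeasurableSpace X]
    [MeasurableSpace Y]
    (P : Measure X)
    (f : X → Y) (hf : Measurable f)
    (d : Y × Y → ℝ≥0∞) (hd : Measurable d) (ε : ℝ≥0∞) :
    (fun μ => μ.map f) '' ambiguitySet (fun x => d (f x.1, f x.2)) ε P
      ⊆ ambiguitySet d ε (P.map f) := by
  rintro _ ⟨Q, ⟨hQprob, hQcost⟩, rfl⟩
  exact ⟨Measure.isProbabilityMeasure_map hf.aemeasurable, (OTCost_map_le hf hd P Q).trans hQcost⟩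

/-- Pushforward of the OT ambiguity set with cost `d ∘ (f × f)` is contained in the
OT ambiguity set with cost `d` around the pushforward center. -/
theorem pushforward_ambiguity_subset
    {X Y : Type*}
    [MeasurableSpace X] [TopologicalSpace X] [PolishSpace X] [BorelSpace X]
    [MeasurableSpace Y] [TopologicalSpace Y] [PolishSpace Y] [BorelSpace Y]
    (P : Measure X) [IsProbabilityMeasure P]
    (f : X → Y) (hf : Measurable f)
    (d : Y × Y → ℝ≥0∞) (hd : Measurable d) (ε : ℝ≥0∞) :
    (fun μ => μ.map f) '' ambiguitySet (fun x => d (f x.1, f x.2)) ε P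
      ⊆ ambiguitySet d ε (P.map f) :=
  pushforward_ambiguity_subset_general P f hf d hd ε
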